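/- The lengths of the palindromic prefixes of the infinite Tribonacci word are exactly 0 together with the integers (T_i + T_{i+2} - 3)/2 for i ≥ 1. -/

import Mathlib

/-- The Tribonacci morphism: 0 → 01, 1 → 02, 2 → 0. -/
def tribMap (c : ℕ) : List ℕ := if c = 0 then [0,1] else if c = 1 then [0,2] else [0]

/-- Iterates of the Tribonacci morphism on the word `0`. -/
def tribIter : ℕ → List ℕ
  | 0 => [0]
  | k+1 => (tribIter k).flatMap tribMap

/-- The infinite Tribonacci word, the fixed point starting with 0 of 0→01, 1→02, 2→0. -/
def tribWord (n : ℕ) : ℕ := (tribIter (n+1)).getD n 0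

/-- The Tribonacci numbers. -/
def trib : ℕ → ℕ
  | 0 => 0
  | 1 => 1
  | 2 => 1
  | n+3 => trib (n+2) + trib (n+1) + trib n

/-!
Let `φ = tribSubst` be the Tribonacci morphism acting on words. Every block `b` of `φ` satisfies
`b0 = 0bᴿ`, so `(φ(w)0)ᴿ = φ(wᴿ)0`: the map `p ↦ φ(p)0` sends palindromic prefixes of the
Tribonacci word to palindromic prefixes. Conversely a nonempty palindromic prefix ends with its
first letter `0`, and since every block of `φ` starts with its only `0`, it is `φ(w)0` for a
shorter prefix `w`, which is again a palindrome because `φ` is injective. Hence the palindromic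
prefixes are the words `p_k = palPrefix k`: `p₀ = ε`, `p_{k+1} = φ(p_k)0`. Counting letters gives
`|p_{k+3}| = |p_{k+2}| + |p_{k+1}| + |p_k| + 3`, so `2|p_k| + 3` satisfies the Tribonacci
recurrence and equals `T_{k+1} + T_{k+3}`.
-/

section

open List

def tribSubst (w : List ℕ) : List ℕ := w.flatMap tribMap

@[simp] lemma tribSubst_nil : tribSubst [] = [] := rfl

@[simp] lemma tribSubst_cons (c : ℕ) (w : List ℕ) :
    tribSubst (c :: w) = tribMap c ++ tribSubst w := rfl

@[simp] lemma tribSubst_append (u v : List ℕ) :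
    tribSubst (u ++ v) = tribSubst u ++ tribSubst v :=
  flatMap_append

lemma tribIter_succ (k : ℕ) : tribIter (k + 1) = tribSubst (tribIter k) := rfl

lemma exists_tribMap_eq_zero_cons (c : ℕ) : ∃ t, tribMap c = 0 :: t := by
  unfold tribMap; split_ifs <;> exact ⟨_, rfl⟩

lemma tribSubst_ne_cons (w t : List ℕ) {x : ℕ} (hx : x ≠ 0) : tribSubst w ≠ x :: t := by
  cases w with
  | nil => simp
  | cons c w =>
    obtain ⟨s, hs⟩ := exists_tribMap_eq_zero_cons c
    simp [hs, hx.symm]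

lemma length_tribSubst (w : List ℕ) :
    (tribSubst w).length = w.length + w.count 0 + w.count 1 := by
  induction w with
  | nil => rfl
  | cons c w ih => rcases c with _ | _ | c <;> simp [tribMap, ih] <;> omega

lemma count_zero_tribSubst (w : List ℕ) : (tribSubst w).count 0 = w.length := by
  induction w with
  | nil => rfl
  | cons c w ih => rcases c with _ | _ | c <;> simp [tribMap, ih]

lemma count_one_tribSubst (w : List ℕ) : (tribSubst w).count 1 = w.count 0 := by
  induction w with
  | nil => rfl
  | cons c w ih => rcases c with _ | _ | c <;> simp [tribMap, ih]

lemma length_le_length_tribSubst (w : List ℕ) : w.length ≤ (tribSubst w).length := by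
  rw [length_tribSubst]; omega

lemma tribSubst_append_zero_eq (w : List ℕ) :
    tribSubst w ++ [0] = 0 :: w.flatMap (fun c => (tribMap c).reverse) := by
  induction w with
  | nil => rfl
  | cons c w ih =>
    have hblock : tribMap c ++ [0] = 0 :: (tribMap c).reverse := by
      unfold tribMap; split_ifs <;> rfl
    rw [tribSubst_cons, append_assoc, ih, flatMap_cons, ← cons_append, ← hblock, append_assoc]
    rfl

lemma reverse_tribSubst_append_zero (w : List ℕ) :
    (tribSubst w ++ [0]).reverse = tribSubst w.reverse ++ [0] := by
  rw [tribSubst_append_zero_eq, reverse_cons, reverse_flatMap]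
  simp only [Function.comp_def, reverse_reverse, tribSubst]

lemma eq_of_tribSubst_eq {u v : List ℕ} (hu : ∀ c ∈ u, c < 3) (hv : ∀ c ∈ v, c < 3)
    (h : tribSubst u = tribSubst v) : u = v := by
  induction u generalizing v with
  | nil =>
    cases v with
    | nil => rfl
    | cons b v => obtain ⟨s, hs⟩ := exists_tribMap_eq_zero_cons b; simp [hs] at h
  | cons a u ih =>
    cases v with
    | nil => obtain ⟨s, hs⟩ := exists_tribMap_eq_zero_cons a; simp [hs] at h
    | cons b v =>
      have ha := hu a mem_cons_self
      have hb := hv b mem_cons_self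
      have ih' := fun h => ih (fun c hc => hu c (mem_cons_of_mem a hc))
        (v := v) (fun c hc => hv c (mem_cons_of_mem b hc)) h
      interval_cases a <;> interval_cases b <;> simp [tribMap] at h
      all_goals first
        | simp [ih' h]
        | exact absurd h (tribSubst_ne_cons _ _ (by norm_num))
        | exact absurd h.symm (tribSubst_ne_cons _ _ (by norm_num))

lemma exists_prefix_tribSubst_eq {v W : List ℕ} (h : v ++ [0] <+: tribSubst W) :
    ∃ w, w <+: W ∧ v = tribSubst w := by
  induction W generalizing v with
  | nil => simp at h
  | cons c W ih =>
    rcases v with _ | ⟨x, v⟩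
    · exact ⟨[], nil_prefix, rfl⟩
    have hx : x = 0 := by obtain ⟨s, hs⟩ := exists_tribMap_eq_zero_cons c; simp_all
    subst hx
    rcases c with _ | _ | c
    all_goals simp [tribMap] at h
    · rcases v with _ | ⟨y, v⟩ <;> simp at h
      obtain ⟨rfl, h⟩ := h
      obtain ⟨w, hw, rfl⟩ := ih h
      exact ⟨0 :: w, by simpa, rfl⟩
    · rcases v with _ | ⟨y, v⟩ <;> simp at h
      obtain ⟨rfl, h⟩ := h
      obtain ⟨w, hw, rfl⟩ := ih h
      exact ⟨1 :: w, by simpa, rfl⟩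
    · obtain ⟨w, hw, rfl⟩ := ih h
      exact ⟨(c + 2) :: w, by simpa, rfl⟩

lemma exists_tribIter_eq_zero_cons (k : ℕ) : ∃ t, tribIter k = 0 :: t := by
  induction k with
  | zero => exact ⟨[], rfl⟩
  | succ k ih =>
    obtain ⟨t, ht⟩ := ih
    exact ⟨1 :: tribSubst t, by rw [tribIter_succ, ht]; rfl⟩

lemma lt_three_of_mem_tribIter {k c : ℕ} (hc : c ∈ tribIter k) : c < 3 := by
  induction k generalizing c with
  | zero => simp_all [tribIter]
  | succ k ih =>
    obtain ⟨a, -, hc⟩ := mem_flatMap.1 hc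
    unfold tribMap at hc; split_ifs at hc <;> simp at hc <;> omega

lemma tribIter_prefix_tribIter_succ (k : ℕ) : tribIter k <+: tribIter (k + 1) := by
  induction k with
  | zero => exact ⟨[1], rfl⟩
  | succ k ih =>
    obtain ⟨t, ht⟩ := ih
    refine ⟨tribSubst t, ?_⟩
    show tribSubst (tribIter k) ++ tribSubst t = tribSubst (tribIter (k + 1))
    rw [← ht, tribSubst_append]

lemma tribIter_prefix_tribIter {j k : ℕ} (h : j ≤ k) : tribIter j <+: tribIter k := by
  induction h with
  | refl => exact prefix_refl _
  | step _ ih => exact ih.trans (tribIter_prefix_tribIter_succ _)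

lemma lt_length_tribIter (k : ℕ) : k < (tribIter k).length := by
  induction k with
  | zero => simp [tribIter]
  | succ k ih =>
    obtain ⟨t, ht⟩ := exists_tribIter_eq_zero_cons k
    have hsucc : (tribIter (k + 1)).length = (tribSubst t).length + 2 := by
      simp [tribIter_succ, ht, tribMap]
    have := length_le_length_tribSubst t
    simp only [ht, length_cons] at ih
    omega

def IsTribPrefix (u : List ℕ) : Prop := ∃ k, u <+: tribIter k

lemma IsTribPrefix.prefix_tribIter {u : List ℕ} (hu : IsTribPrefix u) {k : ℕ}
    (hk : u.length ≤ k) : u <+: tribIter k := by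
  obtain ⟨m, hm⟩ := hu
  exact prefix_of_prefix_length_le (hm.trans (tribIter_prefix_tribIter (le_max_left m k)))
    (tribIter_prefix_tribIter (le_max_right m k)) (hk.trans (lt_length_tribIter k).le)

lemma IsTribPrefix.of_prefix {u v : List ℕ} (hv : IsTribPrefix v) (h : u <+: v) :
    IsTribPrefix u :=
  let ⟨k, hk⟩ := hv; ⟨k, h.trans hk⟩

lemma IsTribPrefix.eq_of_length_eq {u v : List ℕ} (hu : IsTribPrefix u) (hv : IsTribPrefix v)
    (h : u.length = v.length) : u = v :=
  prefix_of_prefix_length_le (hu.prefix_tribIter le_rfl) (hv.prefix_tribIter h.ge) h.le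
    |>.eq_of_length h

lemma IsTribPrefix.lt_three {u : List ℕ} (hu : IsTribPrefix u) {c : ℕ} (hc : c ∈ u) : c < 3 :=
  let ⟨_, hk⟩ := hu; lt_three_of_mem_tribIter (hk.subset hc)

lemma IsTribPrefix.tribWord_eq_getElem {u : List ℕ} (hu : IsTribPrefix u) {j : ℕ}
    (hj : j < u.length) : tribWord j = u[j] := by
  have hu' : u.take (j + 1) <+: tribIter (j + 1) :=
    (hu.of_prefix (take_prefix _ _)).prefix_tribIter (by simp)
  have hj' : j < (tribIter (j + 1)).length := (lt_length_tribIter _).trans' (by omega)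
  rw [tribWord, getD_eq_getElem _ _ hj', ← hu'.getElem (by simp; omega)]
  simp

lemma IsTribPrefix.eq_zero_cons {u : List ℕ} (hu : IsTribPrefix u) (hne : u ≠ []) :
    ∃ t, u = 0 :: t := by
  obtain ⟨k, t, ht⟩ := hu
  obtain ⟨s, hs⟩ := exists_tribIter_eq_zero_cons k
  rcases u with _ | ⟨x, u⟩
  · exact absurd rfl hne
  · rw [← ht, cons_append, cons.injEq] at hs
    exact ⟨u, by rw [hs.1]⟩

lemma IsTribPrefix.tribSubst_append_zero {u : List ℕ} (hu : IsTribPrefix u) :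
    IsTribPrefix (tribSubst u ++ [0]) := by
  obtain ⟨t, ht⟩ := hu.prefix_tribIter le_rfl
  obtain ⟨c, t, rfl⟩ : ∃ c t', t = c :: t' := by
    rcases t with _ | ⟨c, t⟩
    · have := lt_length_tribIter u.length
      rw [← ht, append_nil] at this
      exact absurd this (lt_irrefl _)
    · exact ⟨c, t, rfl⟩
  obtain ⟨s, hs⟩ := exists_tribMap_eq_zero_cons c
  refine ⟨u.length + 1, s ++ tribSubst t, ?_⟩
  rw [tribIter_succ, ← ht, tribSubst_append, tribSubst_cons, hs]
  simp

def tribPrefix (n : ℕ) : List ℕ := (tribIter n).take n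

lemma isTribPrefix_tribPrefix (n : ℕ) : IsTribPrefix (tribPrefix n) := ⟨n, take_prefix _ _⟩

@[simp] lemma length_tribPrefix (n : ℕ) : (tribPrefix n).length = n := by
  simpa [tribPrefix] using (lt_length_tribIter n).le

def palPrefix : ℕ → List ℕ
  | 0 => []
  | k + 1 => tribSubst (palPrefix k) ++ [0]

lemma reverse_palPrefix (k : ℕ) : (palPrefix k).reverse = palPrefix k := by
  induction k with
  | zero => rfl
  | succ k ih => rw [palPrefix, reverse_tribSubst_append_zero, ih]

lemma isTribPrefix_palPrefix (k : ℕ) : IsTribPrefix (palPrefix k) := by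
  induction k with
  | zero => exact ⟨0, nil_prefix⟩
  | succ k ih => exact ih.tribSubst_append_zero

lemma IsTribPrefix.exists_eq_palPrefix {u : List ℕ} (hu : IsTribPrefix u)
    (hpal : u.reverse = u) : ∃ k, u = palPrefix k := by
  induction h : u.length using Nat.strong_induction_on generalizing u with
  | _ n ih =>
  rcases eq_nil_or_concat' u with rfl | ⟨v, a, rfl⟩
  · exact ⟨0, rfl⟩
  have ha : a = 0 := by
    obtain ⟨t, ht⟩ := hu.eq_zero_cons (by simp)
    rw [reverse_append, reverse_singleton, singleton_append, ht] at hpal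
    exact (cons.inj hpal).1
  subst ha
  have hsubst : v ++ [0] <+: tribSubst (tribIter (v ++ [0]).length) :=
    hu.prefix_tribIter (Nat.le_succ _)
  obtain ⟨w, hw, rfl⟩ := exists_prefix_tribSubst_eq hsubst
  have hw : IsTribPrefix w := ⟨_, hw⟩
  have hwpal : w.reverse = w := by
    rw [reverse_tribSubst_append_zero, append_cancel_right_eq] at hpal
    exact eq_of_tribSubst_eq (fun c hc => hw.lt_three (mem_reverse.1 hc)) (fun c => hw.lt_three) hpal
  have hwlen : w.length < n := by
    have := length_le_length_tribSubst w
    simp only [length_append, length_singleton] at h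
    omega
  obtain ⟨k, rfl⟩ := ih _ hwlen hw hwpal rfl
  exact ⟨k + 1, rfl⟩

lemma IsTribPrefix.reverse_eq_self_iff {u : List ℕ} (hu : IsTribPrefix u) :
    u.reverse = u ↔ ∃ k, u = palPrefix k :=
  ⟨hu.exists_eq_palPrefix, fun ⟨k, hk⟩ => hk ▸ reverse_palPrefix k⟩

lemma reverse_eq_self_iff_getElem {α : Type*} (u : List α) :
    u.reverse = u ↔ ∀ j (hj : j < u.length), u[j] = u[u.length - 1 - j] := by
  simp [ext_getElem_iff, getElem_reverse, eq_comm]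

lemma length_palPrefix_add_three (k : ℕ) :
    (palPrefix (k + 3)).length =
      (palPrefix (k + 2)).length + (palPrefix (k + 1)).length + (palPrefix k).length + 3 := by
  have hlen (k : ℕ) : (palPrefix (k + 1)).length =
      (palPrefix k).length + (palPrefix k).count 0 + (palPrefix k).count 1 + 1 := by
    simp [palPrefix, length_tribSubst]
  have hzero (k : ℕ) : (palPrefix (k + 1)).count 0 = (palPrefix k).length + 1 := by
    simp [palPrefix, count_zero_tribSubst]
  have hone (k : ℕ) : (palPrefix (k + 1)).count 1 = (palPrefix k).count 0 := by
    simp [palPrefix, count_one_tribSubst]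
  rw [hlen (k + 2), hzero (k + 1), hone (k + 1), hzero k]
  ring

lemma two_mul_length_palPrefix_add_three :
    ∀ k, 2 * (palPrefix k).length + 3 = trib (k + 1) + trib (k + 3)
  | 0 | 1 | 2 => rfl
  | k + 3 => by
    have h0 := two_mul_length_palPrefix_add_three k
    have h1 : 2 * (palPrefix (k + 1)).length + 3 = trib (k + 2) + trib (k + 4) :=
      two_mul_length_palPrefix_add_three (k + 1)
    have h2 : 2 * (palPrefix (k + 2)).length + 3 = trib (k + 3) + trib (k + 5) :=
      two_mul_length_palPrefix_add_three (k + 2)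
    have t4 : trib (k + 4) = trib (k + 3) + trib (k + 2) + trib (k + 1) := rfl
    have t6 : trib (k + 6) = trib (k + 5) + trib (k + 4) + trib (k + 3) := rfl
    show 2 * (palPrefix (k + 3)).length + 3 = trib (k + 4) + trib (k + 6)
    rw [length_palPrefix_add_three, t6]
    omega

lemma forall_tribWord_eq_iff (n : ℕ) :
    (∀ j < n, tribWord j = tribWord (n - 1 - j)) ↔ (tribPrefix n).reverse = tribPrefix n := by
  have hu := isTribPrefix_tribPrefix n
  rw [reverse_eq_self_iff_getElem]
  simp only [length_tribPrefix]
  refine forall_congr' fun j => ⟨fun h hj => ?_, fun h hj => ?_⟩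
  · rw [← hu.tribWord_eq_getElem, ← hu.tribWord_eq_getElem]
    exact h hj
  · rw [hu.tribWord_eq_getElem, hu.tribWord_eq_getElem]
    exact h hj

lemma forall_tribWord_eq_iff_exists_length_palPrefix (n : ℕ) :
    (∀ j < n, tribWord j = tribWord (n - 1 - j)) ↔ ∃ k, (palPrefix k).length = n := by
  have hu := isTribPrefix_tribPrefix n
  rw [forall_tribWord_eq_iff, hu.reverse_eq_self_iff]
  refine exists_congr fun k => ⟨fun h => by rw [← h, length_tribPrefix], fun h => ?_⟩
  exact hu.eq_of_length_eq (isTribPrefix_palPrefix k) (by rw [h, length_tribPrefix])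

end

/-- The palindromic prefixes of the Tribonacci word are exactly those of length 0 or
`(T_i + T_{i+2} - 3)/2` for `i ≥ 1`. -/
theorem tribWord_palindromic_prefixes (n : ℕ) :
    (∀ j < n, tribWord j = tribWord (n - 1 - j)) ↔
      n = 0 ∨ ∃ i ≥ 1, 2 * n + 3 = trib i + trib (i + 2) := by
  rw [forall_tribWord_eq_iff_exists_length_palPrefix]
  constructor
  · rintro ⟨k, rfl⟩
    exact Or.inr ⟨k + 1, by omega, two_mul_length_palPrefix_add_three k⟩
  · rintro (rfl | ⟨i, hi, h⟩)
    · exact ⟨0, rfl⟩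
    · obtain ⟨k, rfl⟩ := Nat.exists_eq_add_of_le' hi
      have hk : 2 * n + 3 = 2 * (palPrefix k).length + 3 :=
        h.trans (two_mul_length_palPrefix_add_three k).symm
      exact ⟨k, by omega⟩
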